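/- Let (S, L, τ, ℓ) be a finitely branching labelled Markov chain over a countable state space and s, t ∈ S with d(s,t) < 1. Then there exists a policy T such that for every ε > 0 there exists a pair (u,v) ∈ S² with d(u,v) ≤ ε that is reachable with positive probability from (s,t) in the Markov chain on pairs induced by T. -/

import Mathlib

open scoped ENNReal Classical

/-- `ω` is a coupling of `μ` and `ν`. -/
def IsCoupling {S : Type*} (μ ν : S → ℝ≥0∞) (ω : S × S → ℝ≥0∞) : Prop :=
  (∀ s, (∑' t, ω (s, t)) = μ s) ∧ (∀ t, (∑' s, ω (s, t)) = ν t)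

/-- `r` is a probabilistic bisimulation on the LMC with transitions `τ` and labels `ℓ`. -/
def IsBisimulation {S L : Type*} (τ : S → S → ℝ≥0∞) (ℓ : S → L) (r : S → S → Prop) : Prop :=
  Equivalence r ∧ ∀ s t, r s t → ℓ s = ℓ t ∧
    ∀ u, (∑' v : {v // r u v}, τ s v) = (∑' v : {v // r u v}, τ t v)

/-- Probabilistic bisimilarity: the largest probabilistic bisimulation. -/
def Bisim {S L : Type*} (τ : S → S → ℝ≥0∞) (ℓ : S → L) (s t : S) : Prop :=
  ∃ r, IsBisimulation τ ℓ r ∧ r s t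

/-- The distance operator `Δ`. -/
noncomputable def Delta {S L : Type*} (τ : S → S → ℝ≥0∞) (ℓ : S → L)
    (e : S → S → ℝ≥0∞) (s t : S) : ℝ≥0∞ :=
  if ℓ s ≠ ℓ t then 1
  else ⨅ ω ∈ {ω | IsCoupling (τ s) (τ t) ω}, ∑' p : S × S, ω p * e p.1 p.2

/-- A policy: a coupling for every same-labelled, non-bisimilar pair. -/
def IsPolicy {S L : Type*} (τ : S → S → ℝ≥0∞) (ℓ : S → L)
    (T : S → S → S × S → ℝ≥0∞) : Prop :=
  ∀ s t, ℓ s = ℓ t → ¬ Bisim τ ℓ s t → IsCoupling (τ s) (τ t) (T s t)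

/-- The operator `Θ^T` induced by a policy `T`. -/
noncomputable def Theta {S L : Type*} (τ : S → S → ℝ≥0∞) (ℓ : S → L)
    (T : S → S → S × S → ℝ≥0∞) (e : S → S → ℝ≥0∞) (s t : S) : ℝ≥0∞ :=
  if Bisim τ ℓ s t then 0
  else if ℓ s ≠ ℓ t then 1
  else ∑' p : S × S, T s t p * e p.1 p.2

/-- `x` is the least (pre-)fixed point of `f`. -/
def IsLfp {α : Type*} [Preorder α] (f : α → α) (x : α) : Prop :=
  f x ≤ x ∧ ∀ y, f y ≤ y → x ≤ y

/-- Probability of reaching the target set `Z` in exactly `n` steps in the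
Markov chain on pairs induced by a policy `T`, where bisimilar pairs and
differently-labelled pairs are absorbing. -/
noncomputable def reachN {S L : Type*} (τ : S → S → ℝ≥0∞) (ℓ : S → L)
    (T : S → S → S × S → ℝ≥0∞) (Z : S × S → Prop) : ℕ → S × S → ℝ≥0∞
  | 0, p => if Z p then 1 else 0
  | n + 1, p =>
      if Z p ∨ Bisim τ ℓ p.1 p.2 ∨ ℓ p.1 ≠ ℓ p.2 then 0
      else ∑' q : S × S, T p.1 p.2 q * reachN τ ℓ T Z n q

/-- Probability of ever reaching the target set `Z` from a pair. -/
noncomputable def Reach {S L : Type*} (τ : S → S → ℝ≥0∞) (ℓ : S → L)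
    (T : S → S → S × S → ℝ≥0∞) (Z : S × S → Prop) (p : S × S) : ℝ≥0∞ :=
  ∑' n : ℕ, reachN τ ℓ T Z n p


/-!
Fix a policy `T` that couples every same-labelled pair optimally for `d`, so that `∑ T d ≤ d` at
every same-labelled pair. If every pair reachable from `(s,t)` had `d > ε`, then `d - ε` would be
superharmonic on the reachable pairs and at least `1 - ε` on differently-labelled ones, whence
`(1 - ε) R ≤ d(s,t) - ε` for the probability `R` of reaching a differently-labelled pair. As `R` is a
pre-fixed point of `Δ`, also `d(s,t) ≤ R`, and then `(1 - ε) d(s,t) ≤ d(s,t) - ε` forces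
`d(s,t) ≥ 1`.
-/

lemma continuousOn_tsum_of_forall_notMem {α β : Type*} [TopologicalSpace α]
    {f : α → β → ℝ≥0∞} (hf : ∀ b, Continuous (f · b)) (s : Finset β) {X : Set α}
    (hX : ∀ a ∈ X, ∀ b ∉ s, f a b = 0) : ContinuousOn (fun a => ∑' b, f a b) X :=
  (continuous_finsetSum s fun b _ => hf b).continuousOn.congr fun a ha => tsum_eq_sum (hX a ha)

namespace IsCoupling

variable {S : Type*} {μ ν : S → ℝ≥0∞} {ω : S × S → ℝ≥0∞}

lemma tsum_eq (h : IsCoupling μ ν ω) : ∑' p, ω p = ∑' s, μ s := by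
  rw [ENNReal.tsum_prod']
  exact tsum_congr h.1

lemma apply_le_left (h : IsCoupling μ ν ω) (p : S × S) : ω p ≤ μ p.1 :=
  h.1 p.1 ▸ ENNReal.le_tsum (f := fun v => ω (p.1, v)) p.2

lemma apply_le_right (h : IsCoupling μ ν ω) (p : S × S) : ω p ≤ ν p.2 :=
  h.2 p.2 ▸ ENNReal.le_tsum (f := fun u => ω (u, p.2)) p.1

lemma apply_eq_zero (h : IsCoupling μ ν ω)
    (hμ : {s | μ s ≠ 0}.Finite) (hν : {t | ν t ≠ 0}.Finite) {p : S × S}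
    (hp : p ∉ hμ.toFinset ×ˢ hν.toFinset) : ω p = 0 := by
  rw [Finset.mem_product, not_and_or, Set.Finite.mem_toFinset, Set.Finite.mem_toFinset] at hp
  rcases hp with hp | hp
  · exact le_antisymm ((h.apply_le_left p).trans (not_not.1 hp).le) bot_le
  · exact le_antisymm ((h.apply_le_right p).trans (not_not.1 hp).le) bot_le

end IsCoupling

section Coupling

variable {S : Type*} {μ ν : S → ℝ≥0∞}

lemma isCoupling_prod (hμ : ∑' s, μ s = 1) (hν : ∑' t, ν t = 1) :
    IsCoupling μ ν (fun p => μ p.1 * ν p.2) :=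
  ⟨fun u => by simp [ENNReal.tsum_mul_left, hν], fun v => by simp [ENNReal.tsum_mul_right, hμ]⟩

/-- Within each class `[u]` of `r`, couple proportionally to the product:
`ω (u, v) = μ u * ν v / ν [u]`. -/
lemma exists_isCoupling_of_equivalence {r : S → S → Prop} (hr : Equivalence r)
    (hν : ∑' t, ν t ≠ ∞)
    (h : ∀ u, ∑' v : {v // r u v}, μ v = ∑' v : {v // r u v}, ν v) :
    ∃ ω, IsCoupling μ ν ω ∧ ∀ p, ω p ≠ 0 → r p.1 p.2 := by
  have hclass : ∀ (f : S → ℝ≥0∞) u, ∑' v : {v // r u v}, f v = ∑' v, if r u v then f v else 0 :=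
    fun f u => (tsum_subtype {v | r u v} f).trans (tsum_congr fun v => by
      simp only [Set.indicator, Set.mem_ofPred_eq])
  set m : S → ℝ≥0∞ := fun u => ∑' v, if r u v then ν v else 0
  have hμm : ∀ u, ∑' v, (if r u v then μ v else 0) = m u := fun u => by
    rw [← hclass, h, hclass]
  have hm_ne_top : ∀ u, m u ≠ ∞ := fun u =>
    ne_top_of_le_ne_top hν (ENNReal.tsum_le_tsum fun v => by split_ifs <;> simp)
  have hm_congr : ∀ u v, r u v → m u = m v := fun u v huv =>
    tsum_congr fun w => by
      simp only [show r u w ↔ r v w from ⟨hr.trans (hr.symm huv), hr.trans huv⟩]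
  have hself : ∀ (f : S → ℝ≥0∞) u, f u ≤ ∑' v, if r u v then f v else 0 := fun f u =>
    (if_pos (hr.refl u)).ge.trans (ENNReal.le_tsum (f := fun v => if r u v then f v else 0) u)
  have hcancel : ∀ {a : ℝ≥0∞} u, (m u = 0 → a = 0) → a / m u * m u = a := fun u ha => by
    by_cases h0 : m u = 0
    · simp [h0, ha h0]
    · exact ENNReal.div_mul_cancel h0 (hm_ne_top u)
  refine ⟨fun p => if r p.1 p.2 then μ p.1 * ν p.2 / m p.1 else 0, ⟨fun u => ?_, fun v => ?_⟩,
    fun p hp => by_contra fun hrp => hp (if_neg hrp)⟩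
  · calc ∑' v, (if r u v then μ u * ν v / m u else 0)
        = μ u / m u * m u := by
          rw [← ENNReal.tsum_mul_left]
          refine tsum_congr fun v => ?_
          split_ifs <;> simp [div_eq_mul_inv, mul_right_comm]
      _ = μ u := hcancel u fun h0 => le_antisymm (h0 ▸ hμm u ▸ hself μ u) bot_le
  · calc ∑' u, (if r u v then μ u * ν v / m u else 0)
        = ν v / m v * ∑' u, (if r v u then μ u else 0) := by
          rw [← ENNReal.tsum_mul_left]
          refine tsum_congr fun u => ?_
          by_cases huv : r u v
          · rw [if_pos huv, if_pos (hr.symm huv), hm_congr u v huv, div_eq_mul_inv,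
              div_eq_mul_inv]
            ring
          · rw [if_neg huv, if_neg fun hvu => huv (hr.symm hvu), mul_zero]
      _ = ν v / m v * m v := by rw [hμm]
      _ = ν v := hcancel v fun h0 => le_antisymm (h0 ▸ hself ν v) bot_le

/-- On functions vanishing outside the finite box of supports, the marginals are finite sums. -/
lemma isClosed_setOf_isCoupling (hμ : {s | μ s ≠ 0}.Finite) (hν : {t | ν t ≠ 0}.Finite) :
    IsClosed {ω | IsCoupling μ ν ω} := by
  set X : Set (S × S → ℝ≥0∞) := {ω | ∀ p ∉ hμ.toFinset ×ˢ hν.toFinset, ω p = 0}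
  have hX : IsClosed X := by
    simp only [X, Set.ofPred_forall]
    exact isClosed_iInter fun p => isClosed_iInter fun _ =>
      isClosed_eq (continuous_apply p) continuous_const
  have hrow : ∀ u, ContinuousOn (fun ω : S × S → ℝ≥0∞ => ∑' v, ω (u, v)) X := fun u =>
    continuousOn_tsum_of_forall_notMem (fun v => continuous_apply _) hν.toFinset
      fun ω hω v hv => hω _ (by simp [hv])
  have hcol : ∀ v, ContinuousOn (fun ω : S × S → ℝ≥0∞ => ∑' u, ω (u, v)) X := fun v =>
    continuousOn_tsum_of_forall_notMem (fun u => continuous_apply _) hμ.toFinset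
      fun ω hω u hu => hω _ (by simp [hu])
  have hC : {ω | IsCoupling μ ν ω} = X ∩ (⋂ u, X ∩ (fun ω => ∑' v, ω (u, v)) ⁻¹' {μ u}) ∩
      ⋂ v, X ∩ (fun ω => ∑' u, ω (u, v)) ⁻¹' {ν v} := by
    ext ω
    simp only [Set.mem_ofPred_eq, Set.mem_inter_iff, Set.mem_iInter, Set.mem_preimage,
      Set.mem_singleton_iff]
    have hωX : IsCoupling μ ν ω → ω ∈ X := fun h _ hp => h.apply_eq_zero hμ hν hp
    exact ⟨fun h => ⟨⟨hωX h, fun u => ⟨hωX h, h.1 u⟩⟩, fun v => ⟨hωX h, h.2 v⟩⟩,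
      fun h => ⟨fun u => (h.1.2 u).2, fun v => (h.2 v).2⟩⟩
  rw [hC]
  exact (hX.inter (isClosed_iInter fun u =>
    (hrow u).preimage_isClosed_of_isClosed hX isClosed_singleton)).inter
    (isClosed_iInter fun v => (hcol v).preimage_isClosed_of_isClosed hX isClosed_singleton)

lemma exists_isCoupling_isMinOn (hμ : {s | μ s ≠ 0}.Finite) (hν : {t | ν t ≠ 0}.Finite)
    (hne : ∃ ω, IsCoupling μ ν ω) {c : S × S → ℝ≥0∞} (hc : ∀ p, c p ≠ ∞) :
    ∃ ω, IsCoupling μ ν ω ∧ ∀ ω', IsCoupling μ ν ω' → ∑' p, ω p * c p ≤ ∑' p, ω' p * c p := by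
  have hcost : ContinuousOn (fun ω : S × S → ℝ≥0∞ => ∑' p, ω p * c p) {ω | IsCoupling μ ν ω} :=
    continuousOn_tsum_of_forall_notMem
      (fun p => (ENNReal.continuous_mul_const (hc p)).comp (continuous_apply p))
      (hμ.toFinset ×ˢ hν.toFinset) fun ω hω p hp => by simp [hω.apply_eq_zero hμ hν hp]
  obtain ⟨ω, hω, hmin⟩ := (isClosed_setOf_isCoupling hμ hν).isCompact.exists_isMinOn hne hcost
  exact ⟨ω, hω, fun ω' hω' => hmin hω'⟩

end Coupling

section Distance

variable {S L : Type*} {τ : S → S → ℝ≥0∞} {ℓ : S → L}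

lemma Bisim.label_eq {s t : S} (h : Bisim τ ℓ s t) : ℓ s = ℓ t :=
  let ⟨_, hr, hst⟩ := h
  (hr.2 s t hst).1

lemma Bisim.exists_isCoupling (hdistr : ∀ s, ∑' t, τ s t = 1) {s t : S} (h : Bisim τ ℓ s t) :
    ∃ ω, IsCoupling (τ s) (τ t) ω ∧ ∀ p, ω p ≠ 0 → Bisim τ ℓ p.1 p.2 := by
  obtain ⟨r, hr, hst⟩ := h
  obtain ⟨ω, hω, hsupp⟩ :=
    exists_isCoupling_of_equivalence hr.1 (by simp [hdistr]) (hr.2 s t hst).2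
  exact ⟨ω, hω, fun p hp => ⟨r, hr, hsupp p hp⟩⟩

lemma Delta_of_label_ne {e : S → S → ℝ≥0∞} {s t : S} (h : ℓ s ≠ ℓ t) :
    Delta τ ℓ e s t = 1 :=
  if_pos h

lemma Delta_le_tsum {e : S → S → ℝ≥0∞} {s t : S} (h : ℓ s = ℓ t) {ω : S × S → ℝ≥0∞}
    (hω : IsCoupling (τ s) (τ t) ω) : Delta τ ℓ e s t ≤ ∑' p, ω p * e p.1 p.2 := by
  rw [Delta, if_neg (not_not.2 h)]
  exact iInf₂_le ω hω

lemma exists_isCoupling_tsum_le_Delta (hdistr : ∀ s, ∑' t, τ s t = 1)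
    (hfin : ∀ s, {t | τ s t ≠ 0}.Finite) {e : S → S → ℝ≥0∞} (he : ∀ u v, e u v ≠ ∞) {s t : S}
    (h : ℓ s = ℓ t) :
    ∃ ω, IsCoupling (τ s) (τ t) ω ∧ ∑' p, ω p * e p.1 p.2 ≤ Delta τ ℓ e s t := by
  obtain ⟨ω, hω, hmin⟩ := exists_isCoupling_isMinOn (hfin s) (hfin t)
    ⟨_, isCoupling_prod (hdistr s) (hdistr t)⟩ (c := fun p => e p.1 p.2) fun p => he p.1 p.2
  refine ⟨ω, hω, ?_⟩
  rw [Delta, if_neg (not_not.2 h)]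
  exact le_iInf₂ hmin

variable {d : S → S → ℝ≥0∞}

lemma IsLfp.le_one (hdistr : ∀ s, ∑' t, τ s t = 1) (hd : IsLfp (Delta τ ℓ) d) (s t : S) :
    d s t ≤ 1 := by
  refine hd.2 (fun _ _ => 1) (fun u v => ?_) s t
  by_cases h : ℓ u = ℓ v
  · calc Delta τ ℓ (fun _ _ => 1) u v ≤ ∑' p : S × S, τ u p.1 * τ v p.2 * 1 :=
          Delta_le_tsum h (isCoupling_prod (hdistr u) (hdistr v))
      _ = 1 := by simp only [mul_one, (isCoupling_prod (hdistr u) (hdistr v)).tsum_eq, hdistr]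
  · exact (Delta_of_label_ne h).le

lemma IsLfp.one_le_of_label_ne (hd : IsLfp (Delta τ ℓ) d) {s t : S} (h : ℓ s ≠ ℓ t) :
    1 ≤ d s t :=
  (Delta_of_label_ne h).ge.trans (hd.1 s t)

lemma IsLfp.exists_optimal_policy (hdistr : ∀ s, ∑' t, τ s t = 1)
    (hfin : ∀ s, {t | τ s t ≠ 0}.Finite) (hd : IsLfp (Delta τ ℓ) d) :
    ∃ T : S → S → S × S → ℝ≥0∞, ∀ u v, ℓ u = ℓ v →
      IsCoupling (τ u) (τ v) (T u v) ∧ ∑' p, T u v p * d p.1 p.2 ≤ d u v := by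
  have hd_ne_top : ∀ u v, d u v ≠ ∞ := fun u v =>
    ne_top_of_le_ne_top ENNReal.one_ne_top (hd.le_one hdistr u v)
  have h : ∀ u v, ∃ ω : S × S → ℝ≥0∞, ℓ u = ℓ v →
      IsCoupling (τ u) (τ v) ω ∧ ∑' p, ω p * d p.1 p.2 ≤ d u v := fun u v => by
    by_cases hl : ℓ u = ℓ v
    · obtain ⟨ω, hω, hle⟩ := exists_isCoupling_tsum_le_Delta hdistr hfin hd_ne_top hl
      exact ⟨ω, fun _ => ⟨hω, hle.trans (hd.1 u v)⟩⟩
    · exact ⟨0, fun h' => absurd h' hl⟩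
  choose T hT using h
  exact ⟨T, hT⟩

end Distance

section Reach

variable {S L : Type*} {τ : S → S → ℝ≥0∞} {ℓ : S → L} {T : S → S → S × S → ℝ≥0∞}
  {Z : S × S → Prop} {p q : S × S}

lemma reachN_succ_of_not (hZ : ¬ Z p) (hb : ¬ Bisim τ ℓ p.1 p.2) (hl : ℓ p.1 = ℓ p.2) (n : ℕ) :
    reachN τ ℓ T Z (n + 1) p = ∑' q, T p.1 p.2 q * reachN τ ℓ T Z n q := by
  rw [reachN, if_neg (by tauto)]

lemma reachN_zero_of_not (hZ : ¬ Z p) : reachN τ ℓ T Z 0 p = 0 :=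
  if_neg hZ

lemma reachN_succ_ne_zero (hZ : ¬ Z p) (hb : ¬ Bisim τ ℓ p.1 p.2) (hl : ℓ p.1 = ℓ p.2)
    (hT : T p.1 p.2 q ≠ 0) {n : ℕ} (hq : reachN τ ℓ T Z n q ≠ 0) :
    reachN τ ℓ T Z (n + 1) p ≠ 0 := by
  rw [reachN_succ_of_not hZ hb hl]
  exact (pos_iff_ne_zero.2 (mul_ne_zero hT hq)).trans_le (ENNReal.le_tsum q) |>.ne'

lemma reach_ne_zero_iff : Reach τ ℓ T Z p ≠ 0 ↔ ∃ n, reachN τ ℓ T Z n p ≠ 0 := by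
  simp [Reach, ENNReal.tsum_eq_zero]

lemma reach_eq_tsum (hZ : ¬ Z p) (hb : ¬ Bisim τ ℓ p.1 p.2) (hl : ℓ p.1 = ℓ p.2) :
    Reach τ ℓ T Z p = ∑' q, T p.1 p.2 q * Reach τ ℓ T Z q := by
  rw [Reach, tsum_eq_zero_add' ENNReal.summable]
  simp only [reachN_succ_of_not hZ hb hl, reachN_zero_of_not hZ, zero_add, Reach,
    ← ENNReal.tsum_mul_left]
  exact ENNReal.tsum_comm

lemma reach_self : Reach τ ℓ T (· = p) p ≠ 0 :=
  reach_ne_zero_iff.2 ⟨0, by simp [reachN]⟩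

lemma exists_reachN_ne_zero_of_step (hb : ¬ Bisim τ ℓ p.1 p.2) (hl : ℓ p.1 = ℓ p.2)
    (hT : T p.1 p.2 q ≠ 0) :
    ∀ n w, reachN τ ℓ T (· = p) n w ≠ 0 → ∃ m, reachN τ ℓ T (· = q) m w ≠ 0 := by
  have hq : reachN τ ℓ T (· = q) 0 q ≠ 0 := by simp [reachN]
  intro n
  induction n with
  | zero =>
    intro w hw
    obtain rfl : w = p := by by_contra h; simp [reachN, h] at hw
    by_cases hwq : w = q
    · exact ⟨0, hwq ▸ hq⟩
    · exact ⟨1, reachN_succ_ne_zero (Z := (· = q)) hwq hb hl hT hq⟩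
  | succ n ih =>
    intro w hw
    have hw' : ¬ (w = p ∨ Bisim τ ℓ w.1 w.2 ∨ ℓ w.1 ≠ ℓ w.2) := fun h => hw (by rw [reachN, if_pos h])
    push Not at hw'
    rw [reachN_succ_of_not (Z := (· = p)) hw'.1 hw'.2.1 hw'.2.2] at hw
    obtain ⟨q', hq'⟩ := not_forall.1 (mt ENNReal.tsum_eq_zero.2 hw)
    obtain ⟨m, hm⟩ := ih q' (right_ne_zero_of_mul hq')
    by_cases hwq : w = q
    · exact ⟨0, hwq ▸ hq⟩
    · exact ⟨m + 1, reachN_succ_ne_zero (Z := (· = q)) hwq hw'.2.1 hw'.2.2 (left_ne_zero_of_mul hq') hm⟩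

lemma reach_ne_zero_of_step (hb : ¬ Bisim τ ℓ p.1 p.2) (hl : ℓ p.1 = ℓ p.2)
    (hT : T p.1 p.2 q ≠ 0) {w : S × S} (hp : Reach τ ℓ T (· = p) w ≠ 0) :
    Reach τ ℓ T (· = q) w ≠ 0 :=
  have ⟨n, hn⟩ := reach_ne_zero_iff.1 hp
  reach_ne_zero_iff.2 (exists_reachN_ne_zero_of_step hb hl hT n w hn)

lemma mul_reach_le {A : Set (S × S)} {c : ℝ≥0∞} {f : S × S → ℝ≥0∞}
    (hA : ∀ p ∈ A, ¬ Z p → ¬ Bisim τ ℓ p.1 p.2 → ℓ p.1 = ℓ p.2 → ∀ q, T p.1 p.2 q ≠ 0 → q ∈ A)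
    (hZ : ∀ p ∈ A, Z p → c ≤ f p)
    (hf : ∀ p ∈ A, ¬ Z p → ¬ Bisim τ ℓ p.1 p.2 → ℓ p.1 = ℓ p.2 →
      ∑' q, T p.1 p.2 q * f q ≤ f p)
    (hp : p ∈ A) : c * Reach τ ℓ T Z p ≤ f p := by
  suffices h : ∀ n, ∀ p ∈ A, c * ∑ k ∈ Finset.range n, reachN τ ℓ T Z k p ≤ f p by
    rw [Reach, ENNReal.tsum_eq_iSup_nat, ENNReal.mul_iSup]
    exact iSup_le fun n => h n p hp
  intro n
  induction n with
  | zero => simp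
  | succ n ih =>
    intro p hp
    rw [Finset.sum_range_succ']
    by_cases hZp : Z p
    · simpa [reachN, hZp] using hZ p hp hZp
    by_cases habs : Bisim τ ℓ p.1 p.2 ∨ ℓ p.1 ≠ ℓ p.2
    · simp [reachN, hZp, habs]
    push Not at habs
    simp only [reachN_succ_of_not hZp habs.1 habs.2, reachN_zero_of_not hZp, add_zero]
    calc c * ∑ k ∈ Finset.range n, ∑' q, T p.1 p.2 q * reachN τ ℓ T Z k q
        = ∑' q, T p.1 p.2 q * (c * ∑ k ∈ Finset.range n, reachN τ ℓ T Z k q) := by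
          rw [← Summable.tsum_finsetSum fun _ _ => ENNReal.summable, ← ENNReal.tsum_mul_left]
          refine tsum_congr fun q => ?_
          rw [← Finset.mul_sum, mul_left_comm]
      _ ≤ ∑' q, T p.1 p.2 q * f q := ENNReal.tsum_le_tsum fun q => by
          by_cases hq : T p.1 p.2 q = 0
          · simp [hq]
          · gcongr
            exact ih q (hA p hp hZp habs.1 habs.2 q hq)
      _ ≤ f p := hf p hp hZp habs.1 habs.2

lemma reach_label_ne_eq_zero_of_bisim (h : Bisim τ ℓ p.1 p.2) :
    Reach τ ℓ T (fun q => ℓ q.1 ≠ ℓ q.2) p = 0 :=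
  ENNReal.tsum_eq_zero.2 fun n => by
    cases n with
    | zero => simp [reachN, h.label_eq]
    | succ n => rw [reachN, if_pos (Or.inr (Or.inl h))]

/-- The reachability probability of differently-labelled pairs is a pre-fixed point of `Δ`. -/
lemma IsLfp.le_reach (hdistr : ∀ s, ∑' t, τ s t = 1) {d : S → S → ℝ≥0∞}
    (hd : IsLfp (Delta τ ℓ) d) (hT : IsPolicy τ ℓ T) (s t : S) :
    d s t ≤ Reach τ ℓ T (fun q => ℓ q.1 ≠ ℓ q.2) (s, t) := by
  refine hd.2 (fun u v => Reach τ ℓ T _ (u, v)) (fun u v => ?_) s t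
  dsimp only
  by_cases hl : ℓ u = ℓ v
  swap
  · rw [Delta_of_label_ne hl]
    exact (show reachN τ ℓ T (fun q => ℓ q.1 ≠ ℓ q.2) 0 (u, v) = 1 by simp [reachN, hl]) ▸
      ENNReal.le_tsum 0
  by_cases hb : Bisim τ ℓ u v
  · obtain ⟨ω, hω, hsupp⟩ := hb.exists_isCoupling hdistr
    refine (Delta_le_tsum hl hω).trans (le_of_eq ?_ |>.trans bot_le)
    refine ENNReal.tsum_eq_zero.2 fun p => ?_
    by_cases hp : ω p = 0
    · simp [hp]
    · rw [reach_label_ne_eq_zero_of_bisim (hsupp p hp), mul_zero]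
  · rw [reach_eq_tsum (p := (u, v)) (not_not.2 hl) hb hl]
    exact Delta_le_tsum hl (hT u v hl hb)

end Reach

lemma ENNReal.tsum_mul_tsub {α : Type*} {ω g : α → ℝ≥0∞} (hω : ∑' a, ω a = 1) {ε : ℝ≥0∞}
    (hε : ε ≠ ∞) (hg : ∀ a, ω a ≠ 0 → ε ≤ g a) :
    ∑' a, ω a * (g a - ε) = ∑' a, ω a * g a - ε := by
  refine ENNReal.eq_sub_of_add_eq hε ?_
  calc ∑' a, ω a * (g a - ε) + ε = ∑' a, ω a * (g a - ε) + ∑' a, ω a * ε := by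
        rw [ENNReal.tsum_mul_right, hω, one_mul]
    _ = ∑' a, ω a * (g a - ε + ε) := by
        rw [← ENNReal.tsum_add]
        simp only [mul_add]
    _ = ∑' a, ω a * g a := tsum_congr fun a => by
        by_cases ha : ω a = 0
        · simp [ha]
        · rw [tsub_add_cancel_of_le (hg a ha)]

lemma ENNReal.sub_lt_one_sub_mul {x ε : ℝ≥0∞} (hε : 0 < ε) (hεx : ε ≤ x) (hx : x < 1) :
    x - ε < (1 - ε) * x := by
  lift x to NNReal using ne_top_of_lt (hx.trans ENNReal.one_lt_top)
  lift ε to NNReal using ne_top_of_le_ne_top ENNReal.coe_ne_top hεx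
  have hε1 : ε ≤ 1 := (ENNReal.coe_le_coe.1 hεx).trans (ENNReal.coe_lt_one_iff.1 hx).le
  rw [← ENNReal.coe_one, ← ENNReal.coe_sub, ← ENNReal.coe_sub, ← ENNReal.coe_mul,
    ENNReal.coe_lt_coe, ← NNReal.coe_lt_coe, NNReal.coe_sub (ENNReal.coe_le_coe.1 hεx),
    NNReal.coe_mul, NNReal.coe_sub hε1]
  have hε0 : (0 : ℝ) < ε := NNReal.coe_pos.2 (ENNReal.coe_pos.1 hε)
  have hx1 : (x : ℝ) < 1 := NNReal.coe_lt_one.2 (ENNReal.coe_lt_one_iff.1 hx)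
  push_cast
  nlinarith

theorem stmt13_general {S L : Type*}
    (τ : S → S → ℝ≥0∞) (ℓ : S → L)
    (hdistr : ∀ s, (∑' t, τ s t) = 1)
    (hfin : ∀ s, {t | τ s t ≠ 0}.Finite)
    (d : S → S → ℝ≥0∞) (hd : IsLfp (Delta τ ℓ) d)
    (s t : S) (hst : d s t < 1) :
    ∃ T : S → S → S × S → ℝ≥0∞, IsPolicy τ ℓ T ∧
      ∀ ε : ℝ≥0∞, 0 < ε → ∃ u v : S, d u v ≤ ε ∧
        0 < Reach τ ℓ T (fun p => p = (u, v)) (s, t) := by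
  obtain ⟨T, hT⟩ := hd.exists_optimal_policy hdistr hfin
  have hpol : IsPolicy τ ℓ T := fun u v hl _ => (hT u v hl).1
  refine ⟨T, hpol, fun ε hε => ?_⟩
  by_contra! hfar
  set A := {p : S × S | Reach τ ℓ T (· = p) (s, t) ≠ 0}
  have hAd : ∀ p ∈ A, ε < d p.1 p.2 := fun p hp =>
    lt_of_not_ge fun h => hp (le_antisymm (hfar p.1 p.2 h) bot_le)
  have hε_top : ε ≠ ∞ := ne_top_of_lt ((hAd _ reach_self).trans hst)
  have hA : ∀ p ∈ A, ¬ ℓ p.1 ≠ ℓ p.2 → ¬ Bisim τ ℓ p.1 p.2 → ℓ p.1 = ℓ p.2 →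
      ∀ q, T p.1 p.2 q ≠ 0 → q ∈ A := fun p hp _ hb hl q hq => reach_ne_zero_of_step hb hl hq hp
  have hsuper : ∀ p ∈ A, ¬ ℓ p.1 ≠ ℓ p.2 → ¬ Bisim τ ℓ p.1 p.2 → ℓ p.1 = ℓ p.2 →
      ∑' q, T p.1 p.2 q * (d q.1 q.2 - ε) ≤ d p.1 p.2 - ε := fun p hp hZ hb hl => by
    rw [ENNReal.tsum_mul_tsub ((hT p.1 p.2 hl).1.tsum_eq.trans (hdistr _)) hε_top
      fun q hq => (hAd q (hA p hp hZ hb hl q hq)).le]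
    exact tsub_le_tsub_right (hT p.1 p.2 hl).2 ε
  have hbound : (1 - ε) * Reach τ ℓ T (fun q => ℓ q.1 ≠ ℓ q.2) (s, t) ≤ d s t - ε :=
    mul_reach_le hA (fun p _ hl => tsub_le_tsub_right (hd.one_le_of_label_ne hl) ε) hsuper
      reach_self
  exact (ENNReal.sub_lt_one_sub_mul hε (hAd _ reach_self).le hst).not_ge
    ((mul_le_mul_right (hd.le_reach hdistr hpol s t) _).trans hbound)

/-- If `d(s,t) < 1` then there is a policy `T` such that for every `ε > 0`
some pair `(u,v)` with `d(u,v) ≤ ε` is reachable with positive probability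
from `(s,t)` in the induced pair Markov chain. -/
theorem stmt13 {S L : Type*} [Countable S] [Finite L]
    (τ : S → S → ℝ≥0∞) (ℓ : S → L)
    (hdistr : ∀ s, (∑' t, τ s t) = 1)
    (hfin : ∀ s, {t | τ s t ≠ 0}.Finite)
    (d : S → S → ℝ≥0∞) (hd : IsLfp (Delta τ ℓ) d)
    (s t : S) (hst : d s t < 1) :
    ∃ T : S → S → S × S → ℝ≥0∞, IsPolicy τ ℓ T ∧
      ∀ ε : ℝ≥0∞, 0 < ε → ∃ u v : S, d u v ≤ ε ∧
        0 < Reach τ ℓ T (fun p => p = (u, v)) (s, t) :=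
  stmt13_general τ ℓ hdistr hfin d hd s t hst
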